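/- Let G be a finite abelian group of order n, D(G) its generalized dihedral group (assumed non-abelian), \Gamma the commuting graph of D(G), and z = |{g \in G : g^2 = e}|. If z = 1 (i.e., G has odd order), then the metric dimension of \Gamma equals 2n - 3. -/

import Mathlib

/-- The generalized dihedral group `D(G) = G ⋊ C₂`, with `⟨g, false⟩`
representing `(g, 1)` and `⟨g, true⟩` representing `(g, -1)`.
Multiplication is `(g₁, c₁)(g₂, c₂) = (g₁ g₂^{c₁}, c₁ c₂)`, i.e. `-1` acts by inversion. -/
@[ext]
structure GenDihedral (G : Type) where
  g : G
  b : Bool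
  deriving DecidableEq

namespace GenDihedral

variable {G : Type} [CommGroup G]

instance : Mul (GenDihedral G) :=
  ⟨fun a c => ⟨a.g * (if a.b then c.g⁻¹ else c.g), xor a.b c.b⟩⟩

instance : One (GenDihedral G) := ⟨⟨1, false⟩⟩

instance : Inv (GenDihedral G) := ⟨fun a => ⟨if a.b then a.g else a.g⁻¹, a.b⟩⟩

theorem mul_def (a c : GenDihedral G) :
    a * c = ⟨a.g * (if a.b then c.g⁻¹ else c.g), xor a.b c.b⟩ := rfl

theorem one_def : (1 : GenDihedral G) = ⟨1, false⟩ := rfl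

theorem inv_def (a : GenDihedral G) : a⁻¹ = ⟨if a.b then a.g else a.g⁻¹, a.b⟩ := rfl

instance : Group (GenDihedral G) where
  mul_assoc a c d := by
    obtain ⟨g₁, b₁⟩ := a; obtain ⟨g₂, b₂⟩ := c; obtain ⟨g₃, b₃⟩ := d
    cases b₁ <;> cases b₂ <;> cases b₃ <;>
      simp [mul_def, mul_assoc, mul_comm, mul_left_comm, mul_inv, inv_inv]
  one_mul a := by obtain ⟨g, b⟩ := a; cases b <;> simp [mul_def, one_def]
  mul_one a := by obtain ⟨g, b⟩ := a; cases b <;> simp [mul_def, one_def]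
  inv_mul_cancel a := by
    obtain ⟨g, b⟩ := a; cases b <;> simp [mul_def, one_def, inv_def]

instance [Fintype G] : Fintype (GenDihedral G) :=
  Fintype.ofEquiv (G × Bool)
    ⟨fun p => ⟨p.1, p.2⟩, fun x => (x.g, x.b), fun _ => rfl, fun _ => rfl⟩

instance [DecidableEq G] (a c : GenDihedral G) : Decidable (Commute a c) :=
  decidable_of_iff (a * c = c * a) Iff.rfl

end GenDihedral

namespace GenDihedral

/-- The commuting graph of `D(G)`: vertices are the elements of `D(G)`, and two
distinct vertices are adjacent iff they commute. -/
def commGraph (G : Type) [CommGroup G] : SimpleGraph (GenDihedral G) where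
  Adj u v := u ≠ v ∧ u * v = v * u
  symm := ⟨fun _ _ h => ⟨h.1.symm, h.2.symm⟩⟩
  loopless := ⟨fun _ h => h.1 rfl⟩

instance {G : Type} [CommGroup G] [DecidableEq G] : DecidableRel (commGraph G).Adj :=
  fun u v => show Decidable (u ≠ v ∧ u * v = v * u) from instDecidableAnd

end GenDihedral

/-- `W` is a resolving set of `Γ` if every pair of distinct vertices is distinguished
by its vector of graph distances to the vertices of `W`. -/
def IsResolvingSet {V : Type} (Γ : SimpleGraph V) (W : Set V) : Prop :=
  ∀ u v : V, u ≠ v → ∃ w ∈ W, Γ.dist u w ≠ Γ.dist v w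

/-- The metric dimension of `Γ`: the minimum cardinality of a resolving set. -/
noncomputable def metricDim {V : Type} (Γ : SimpleGraph V) : ℕ :=
  sInf {k : ℕ | ∃ W : Finset V, IsResolvingSet Γ ↑W ∧ W.card = k}

/-- The number `sᵢ` of resolving sets of `Γ` of cardinality `i` (the coefficient of `xⁱ`
in the resolving polynomial `β(Γ, x) = Σᵢ sᵢ xⁱ`). -/
noncomputable def numResolvingSets {V : Type} (Γ : SimpleGraph V) (i : ℕ) : ℕ :=
  Set.ncard {W : Finset V | IsResolvingSet Γ ↑W ∧ W.card = i}

/-!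
If `G` has no element of order two, then in the commuting graph of `D(G)` the identity is
adjacent to every vertex, the rotations `(g, 1)` with `g ≠ e` form a clique, and a reflection
`(g, -1)` is adjacent only to the identity; so all distances are at most `2`. The `n - 1`
non-identity rotations are pairwise twins, and so are the `n` reflections, and a resolving set
omits at most one vertex of each twin class, whence `β(Γ) ≥ (n - 2) + (n - 1)`. Conversely, for
`a² ≠ e`, deleting `(e, 1)`, `(a, 1)` and `(e, -1)` leaves a resolving set: these three vertices
have distinct distances to `(a², 1)` and `(a, -1)`.
-/

namespace SimpleGraph

variable {V : Type} {Γ : SimpleGraph V}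

lemma dist_eq_two_of_adj_of_adj {u v c : V} (hne : u ≠ v) (huv : ¬Γ.Adj u v)
    (hu : Γ.Adj u c) (hv : Γ.Adj v c) : Γ.dist u v = 2 := by
  rw [dist, edist_eq_two_iff.mpr ⟨hne, huv, c, Γ.mem_commonNeighbors.mpr ⟨hu, hv⟩⟩]
  rfl

end SimpleGraph

section ResolvingSet

variable {V : Type} {Γ : SimpleGraph V}

lemma isResolvingSet_of_forall_notMem (hΓ : Γ.Connected) {W : Set V}
    (h : ∀ u ∉ W, ∀ v ∉ W, u ≠ v → ∃ w ∈ W, Γ.dist u w ≠ Γ.dist v w) :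
    IsResolvingSet Γ W := by
  intro u v huv
  by_cases hu : u ∈ W
  · exact ⟨u, hu, by simpa using (hΓ.pos_dist_of_ne huv.symm).ne⟩
  by_cases hv : v ∈ W
  · exact ⟨v, hv, by simpa using (hΓ.pos_dist_of_ne huv).ne'⟩
  exact h u hu v hv huv

lemma IsResolvingSet.card_sdiff_le_one [DecidableEq V] {W S : Finset V}
    (hW : IsResolvingSet Γ W)
    (hS : ∀ u ∈ S, ∀ v ∈ S, ∀ w, w ≠ u → w ≠ v → Γ.dist u w = Γ.dist v w) :
    (S \ W).card ≤ 1 := by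
  refine Finset.card_le_one.mpr fun u hu v hv => by_contra fun huv => ?_
  obtain ⟨w, hw, hd⟩ := hW u v huv
  rw [Finset.mem_sdiff] at hu hv
  exact hd (hS u hu.1 v hv.1 w (by rintro rfl; exact hu.2 hw) (by rintro rfl; exact hv.2 hw))

end ResolvingSet

namespace GenDihedral

open SimpleGraph

variable {G : Type}

def mkEmbedding (b : Bool) : G ↪ GenDihedral G :=
  ⟨(⟨·, b⟩), fun _ _ h => congrArg GenDihedral.g h⟩

@[simp]
lemma mkEmbedding_apply (b : Bool) (g : G) : mkEmbedding b g = ⟨g, b⟩ := rfl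

lemma card [Fintype G] : Fintype.card (GenDihedral G) = 2 * Fintype.card G := by
  rw [Fintype.card_congr ⟨fun x => (x.g, x.b), fun p => ⟨p.1, p.2⟩, fun _ => rfl, fun _ => rfl⟩,
    Fintype.card_prod, Fintype.card_bool, mul_comm]

variable [CommGroup G]

lemma commute_rot_rot (g h : G) : Commute (⟨g, false⟩ : GenDihedral G) ⟨h, false⟩ := by
  simp [Commute, SemiconjBy, mul_def, mul_comm]

lemma commute_rot_refl_iff {g h : G} :
    Commute (⟨g, false⟩ : GenDihedral G) ⟨h, true⟩ ↔ g ^ 2 = 1 := by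
  simp [Commute, SemiconjBy, mul_def, mul_comm g, eq_inv_iff_mul_eq_one, pow_two]

lemma commute_refl_refl_iff {g h : G} :
    Commute (⟨g, true⟩ : GenDihedral G) ⟨h, true⟩ ↔ (g * h⁻¹) ^ 2 = 1 := by
  have : h * g⁻¹ = (g * h⁻¹)⁻¹ := by rw [mul_inv_rev, inv_inv]
  simp only [Commute, SemiconjBy, mul_def, GenDihedral.mk.injEq, if_true, Bool.xor_self, and_true]
  rw [this, eq_inv_iff_mul_eq_one, pow_two]

lemma commGraph_adj_one {v : GenDihedral G} (hv : v ≠ 1) : (commGraph G).Adj 1 v :=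
  ⟨hv.symm, (Commute.one_left v).eq⟩

lemma commGraph_connected : (commGraph G).Connected :=
  (commGraph G).connected_iff_exists_forall_reachable.mpr ⟨1, fun v =>
    (em (v = 1)).elim (fun hv => hv ▸ Reachable.refl _) fun hv => (commGraph_adj_one hv).reachable⟩

lemma commGraph_dist_eq_two {u v : GenDihedral G} (hne : u ≠ v) (huv : ¬(commGraph G).Adj u v) :
    (commGraph G).dist u v = 2 := by
  have hu : u ≠ 1 := by rintro rfl; exact huv (commGraph_adj_one hne.symm)
  have hv : v ≠ 1 := by rintro rfl; exact huv (commGraph_adj_one hne).symm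
  exact dist_eq_two_of_adj_of_adj hne huv (commGraph_adj_one hu).symm (commGraph_adj_one hv).symm

lemma commGraph_dist_rot (hsq : ∀ g : G, g ^ 2 = 1 → g = 1) {g : G} (hg : g ≠ 1)
    {w : GenDihedral G} (hw : w ≠ ⟨g, false⟩) :
    (commGraph G).dist ⟨g, false⟩ w = if w.b then 2 else 1 := by
  obtain ⟨h, _ | _⟩ := w
  · exact dist_eq_one_iff_adj.mpr ⟨hw.symm, commute_rot_rot g h⟩
  · exact commGraph_dist_eq_two (by simp) fun hadj => hg (hsq g (commute_rot_refl_iff.mp hadj.2))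

lemma commGraph_dist_refl [DecidableEq G] (hsq : ∀ g : G, g ^ 2 = 1 → g = 1) {g : G}
    {w : GenDihedral G} (hw : w ≠ ⟨g, true⟩) :
    (commGraph G).dist ⟨g, true⟩ w = if w = 1 then 1 else 2 := by
  split_ifs with hw1
  · subst hw1
    exact dist_eq_one_iff_adj.mpr (commGraph_adj_one hw.symm).symm
  refine commGraph_dist_eq_two hw.symm fun hadj => ?_
  obtain ⟨h, _ | _⟩ := w
  · exact hw1 (by rw [hsq h (commute_rot_refl_iff.mp hadj.2.symm), one_def])
  · exact hw (by rw [mul_inv_eq_one.mp (hsq _ (commute_refl_refl_iff.mp hadj.2))])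

lemma le_card_of_isResolvingSet [Fintype G] (hsq : ∀ g : G, g ^ 2 = 1 → g = 1)
    {W : Finset (GenDihedral G)} (hW : IsResolvingSet (commGraph G) W) :
    2 * Fintype.card G - 3 ≤ W.card := by
  classical
  set R := (Finset.univ.erase (1 : G)).map (mkEmbedding false)
  set L := (Finset.univ : Finset G).map (mkEmbedding true)
  have hR : (R \ W).card ≤ 1 := hW.card_sdiff_le_one <| by
    simp only [R, Finset.mem_map, Finset.mem_erase]
    rintro _ ⟨g, ⟨hg, -⟩, rfl⟩ _ ⟨h, ⟨hh, -⟩, rfl⟩ w hwg hwh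
    simp only [mkEmbedding_apply] at hwg hwh ⊢
    rw [commGraph_dist_rot hsq hg hwg, commGraph_dist_rot hsq hh hwh]
  have hL : (L \ W).card ≤ 1 := hW.card_sdiff_le_one <| by
    simp only [L, Finset.mem_map]
    rintro _ ⟨g, -, rfl⟩ _ ⟨h, -, rfl⟩ w hwg hwh
    simp only [mkEmbedding_apply] at hwg hwh ⊢
    rw [commGraph_dist_refl hsq hwg, commGraph_dist_refl hsq hwh]
  have hRL : Disjoint R L := Finset.disjoint_left.mpr <| by
    simp only [R, L, Finset.mem_map, mkEmbedding_apply]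
    rintro _ ⟨g, -, rfl⟩ ⟨h, -, hgh⟩
    exact Bool.noConfusion (congrArg GenDihedral.b hgh)
  have hRLW : (R ∩ W).card + (L ∩ W).card ≤ W.card := by
    rw [← Finset.card_union_of_disjoint (hRL.mono Finset.inter_subset_left Finset.inter_subset_left),
      ← Finset.union_inter_distrib_right]
    exact Finset.card_le_card Finset.inter_subset_right
  have hRc : R.card = Fintype.card G - 1 := by simp [R]
  have hLc : L.card = Fintype.card G := by simp [L]
  have hRW := Finset.card_sdiff_add_card_inter R W
  have hLW := Finset.card_sdiff_add_card_inter L W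
  omega

lemma exists_isResolvingSet_card [Fintype G] (hsq : ∀ g : G, g ^ 2 = 1 → g = 1) {a : G}
    (ha : a ^ 2 ≠ 1) : ∃ W : Finset (GenDihedral G),
      IsResolvingSet (commGraph G) W ∧ W.card = 2 * Fintype.card G - 3 := by
  classical
  have ha1 : a ≠ 1 := by rintro rfl; exact ha (one_pow 2)
  have ha2 : a ^ 2 ≠ a := fun h => ha1 (by simpa [pow_two] using h)
  set r : GenDihedral G := ⟨a ^ 2, false⟩
  set s : GenDihedral G := ⟨a, true⟩
  have hr1 : r ≠ 1 := by simp [r, one_def, ha]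
  have hs1 : s ≠ 1 := by simp [s, one_def]
  have d1s : (commGraph G).dist 1 s = 1 := dist_eq_one_iff_adj.mpr (commGraph_adj_one hs1)
  have d1r : (commGraph G).dist 1 r = 1 := dist_eq_one_iff_adj.mpr (commGraph_adj_one hr1)
  have das : (commGraph G).dist ⟨a, false⟩ s = 2 := by
    rw [commGraph_dist_rot hsq ha1 (by simp [s])]; rfl
  have dar : (commGraph G).dist ⟨a, false⟩ r = 1 := by
    rw [commGraph_dist_rot hsq ha1 (by simp [r, ha2])]; rfl
  have dts : (commGraph G).dist ⟨1, true⟩ s = 2 := by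
    rw [commGraph_dist_refl hsq (by simp [s, ha1]), if_neg hs1]
  have dtr : (commGraph G).dist ⟨1, true⟩ r = 2 := by
    rw [commGraph_dist_refl hsq (by simp [r]), if_neg hr1]
  refine ⟨Finset.univ \ {1, ⟨a, false⟩, ⟨1, true⟩},
    isResolvingSet_of_forall_notMem commGraph_connected fun u hu v hv huv => ?_, ?_⟩
  · by_contra! h
    have hs := h s (by simp [s, one_def, ha1])
    have hr := h r (by simp [r, one_def, ha, ha2])
    simp only [Finset.coe_sdiff, Finset.coe_univ, Finset.coe_insert, Finset.coe_singleton,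
      Set.mem_sdiff, Set.mem_univ, Set.mem_insert_iff, Set.mem_singleton_iff, true_and,
      not_not] at hu hv
    -- the distances of `1`, `(a, 1)`, `(e, -1)` to `s` and `r` are `(1, 1)`, `(2, 1)`, `(2, 2)`
    rcases hu with rfl | rfl | rfl <;> rcases hv with rfl | rfl | rfl <;> first
      | exact huv rfl | omega
  · rw [Finset.card_sdiff_of_subset (Finset.subset_univ _), Finset.card_univ, card,
      Finset.card_insert_of_notMem (by simp [one_def, ha1.symm]),
      Finset.card_pair (by simp), Nat.sub_add_eq]

lemma metricDim_commGraph [Fintype G] (hsq : ∀ g : G, g ^ 2 = 1 → g = 1)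
    (hna : ∃ a : G, a ^ 2 ≠ 1) : metricDim (commGraph G) = 2 * Fintype.card G - 3 := by
  obtain ⟨a, ha⟩ := hna
  refine IsLeast.csInf_eq ⟨exists_isResolvingSet_card hsq ha, ?_⟩
  rintro _ ⟨W, hW, rfl⟩
  exact le_card_of_isResolvingSet hsq hW

end GenDihedral

open GenDihedral in
/-- If `z = |{g : g² = e}| = 1` (i.e. `G` has odd order), the metric dimension of the
commuting graph of a non-abelian `D(G)` equals `2n - 3`, where `n = |G|`. -/
theorem stmt15 {G : Type} [CommGroup G] [Fintype G] [DecidableEq G]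
    (hna : ∃ g : G, g ^ 2 ≠ 1) (n z : ℕ) (hn : n = Fintype.card G)
    (hz : z = (Finset.univ.filter fun g : G => g ^ 2 = 1).card) (hz1 : z = 1) :
    metricDim (commGraph G) = 2 * n - 3 := by
  have hsq : ∀ g : G, g ^ 2 = 1 → g = 1 := fun g hg =>
    Finset.card_le_one.mp (hz.symm.trans hz1).le g (by simpa using hg) 1 (by simp)
  rw [hn]
  exact metricDim_commGraph hsq hna
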